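/- Let G be a rigid group with principal series G = G_1 > G_2 > ... > G_n > G_{n+1} = 1. Then: (1) G_i ⊇ G^{(i−1)} for i = 1, ..., n+1; (2) G^{(i−1)} is not contained in G_{i+1} for i = 1, ..., n. In particular, the solvability class of G is exactly n. -/

import Mathlib

/-!
STATEMENT 11 (Lemma on solvability class): Let `G` be rigid with principal series
`G = G_1 > ... > G_{n+1} = 1`. Then (1) `G_i ⊇ G^{(i−1)}` for `i = 1, ..., n+1`;
(2) `G^{(i−1)} ⊄ G_{i+1}` for `i = 1, ..., n`. In particular, the solvability class of
`G` is exactly `n`. (Indices here are 0-based: `s i = G_{i+1}`, and `derivedSeries G i`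
is `G^{(i)}`.)
-/

open scoped commutatorElement

/-- A principal series of length `n`: `s 0 = G ≥ ... ≥ s n = 1`, each term normal in `G`,
strictly decreasing, with abelian factors `s i / s (i+1)` that are torsion-free as right
`ℤ[G / s i]`-modules (the module structure given by conjugation); the torsion-freeness is
expressed elementwise: a nonzero element of the group ring (given by representatives
`h j` of pairwise distinct cosets modulo `s i` and integer coefficients `m j`, not all zero)
applied to `c ∈ s i` lies in `s (i+1)` only if `c` does. -/
def IsPrincipalSeries {G : Type*} [Group G] {n : ℕ} (s : Fin (n + 1) → Subgroup G) : Prop :=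
  s 0 = ⊤ ∧ s (Fin.last n) = ⊥ ∧
  (∀ i, (s i).Normal) ∧
  (∀ i : Fin n, s i.succ < s i.castSucc) ∧
  (∀ i : Fin n, ∀ x ∈ s i.castSucc, ∀ y ∈ s i.castSucc, ⁅x, y⁆ ∈ s i.succ) ∧
  (∀ i : Fin n, ∀ c ∈ s i.castSucc, ∀ (k : ℕ) (h : Fin k → G) (m : Fin k → ℤ),
    (∀ j l : Fin k, j ≠ l → (h j)⁻¹ * h l ∉ s i.castSucc) →
    (∃ j, m j ≠ 0) →
    (List.ofFn fun j => ((h j)⁻¹ * c * h j) ^ m j).prod ∈ s i.succ →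
    c ∈ s i.succ)

/-- A group is `n`-rigid if it has a principal series of length `n`. -/
def IsRigid (G : Type*) [Group G] (n : ℕ) : Prop :=
  ∃ s : Fin (n + 1) → Subgroup G, IsPrincipalSeries s

/-- The family `t` of elements of `Gi` is linearly independent (in the factor `Gi/Gi1`)
over the group ring `ℤ[G/Gi]`, expressed elementwise. -/
def LinIndepMod {G : Type*} [Group G] (Gi Gi1 : Subgroup G) {k : ℕ} (t : Fin k → G) : Prop :=
  (∀ j, t j ∈ Gi) ∧
  ∀ (l : ℕ) (h : Fin k → Fin l → G) (m : Fin k → Fin l → ℤ),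
    (∀ j, ∀ p q : Fin l, p ≠ q → (h j p)⁻¹ * h j q ∉ Gi) →
    (List.ofFn fun j : Fin k =>
      (List.ofFn fun p : Fin l => ((h j p)⁻¹ * t j * h j p) ^ m j p).prod).prod ∈ Gi1 →
    ∀ j p, m j p = 0

/-- The rank of the factor `Gi/Gi1` as a `ℤ[G/Gi]`-module: the supremum of cardinalities
of linearly independent families. -/
noncomputable def rankAt {G : Type*} [Group G] (Gi Gi1 : Subgroup G) : ℕ∞ :=
  ⨆ (k : ℕ) (_ : ∃ t : Fin k → G, LinIndepMod Gi Gi1 t), (k : ℕ∞)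

/-- `r_i(G)` computed from a principal series `s`. -/
noncomputable def seriesRank {G : Type*} [Group G] {n : ℕ} (s : Fin (n + 1) → Subgroup G)
    (i : Fin n) : ℕ∞ :=
  rankAt (s i.castSucc) (s i.succ)

/-!
Each factor `G_i / G_{i+1}` is abelian, so by induction `G^{(i)} ≤ G_{i+1}`. Conversely, for
`a ∉ G_i` and `g ∈ G_i` the commutator `[a, g]` represents `g^{a⁻¹ - 1}` in `G_i / G_{i+1}`,
and `a⁻¹ - 1 ≠ 0` in `ℤ[G/G_i]`; torsion-freeness thus gives `[a, g] ∉ G_{i+1}` whenever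
`g ∉ G_{i+1}`. Starting from `a ∈ G^{(k)} \ G_{k+1}`, commuting twice with `a` turns an
element of `G_{k+1} \ G_{k+2}` into one of `G^{(k+1)} \ G_{k+2}`.
-/

namespace IsPrincipalSeries

variable {G : Type*} [Group G] {n : ℕ} {s : Fin (n + 1) → Subgroup G}

theorem derivedSeries_le (hs : IsPrincipalSeries s) (i : Fin (n + 1)) :
    derivedSeries G i ≤ s i := by
  induction i using Fin.induction with
  | zero => simp [hs.1]
  | succ i ih =>
    rw [Fin.val_succ, derivedSeries_succ, Subgroup.commutator_le]
    exact fun x hx y hy => hs.2.2.2.2.1 i x (ih hx) y (ih hy)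

theorem mem_succ_of_commutatorElement_mem (hs : IsPrincipalSeries s) (i : Fin n) {a g : G}
    (ha : a ∉ s i.castSucc) (hg : g ∈ s i.castSucc) (hag : ⁅a, g⁆ ∈ s i.succ) :
    g ∈ s i.succ := by
  refine hs.2.2.2.2.2 i g hg 2 ![a⁻¹, 1] ![1, -1] ?_ ⟨0, one_ne_zero⟩ ?_
  · intro j l hjl
    fin_cases j <;> fin_cases l
    all_goals first
      | exact absurd rfl hjl
      | simpa using ha
  · simpa [List.ofFn_succ, commutatorElement_def, mul_assoc] using hag

theorem commutatorElement_mem_and_notMem (hs : IsPrincipalSeries s) (i : Fin n) {a g : G}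
    (ha : a ∉ s i.castSucc) (hg : g ∈ s i.castSucc) (hg' : g ∉ s i.succ) :
    ⁅a, g⁆ ∈ s i.castSucc ∧ ⁅a, g⁆ ∉ s i.succ :=
  haveI := hs.2.2.1 i.castSucc
  ⟨Subgroup.commutator_le_right ⊤ _ (Subgroup.commutator_mem_commutator (Subgroup.mem_top a) hg),
    fun hag => hg' (hs.mem_succ_of_commutatorElement_mem i ha hg hag)⟩

theorem exists_mem_derivedSeries_notMem (hs : IsPrincipalSeries s) :
    ∀ (k : ℕ) (hk : k < n), ∃ a ∈ derivedSeries G k, a ∉ s ⟨k + 1, Nat.succ_lt_succ hk⟩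
  | 0, hk => by
    obtain ⟨a, -, ha⟩ := SetLike.exists_of_lt (hs.2.2.2.1 ⟨0, hk⟩)
    exact ⟨a, Subgroup.mem_top a, ha⟩
  | k + 1, hk => by
    obtain ⟨a, haD, haS⟩ := hs.exists_mem_derivedSeries_notMem k (Nat.lt_of_succ_lt hk)
    let i : Fin n := ⟨k + 1, hk⟩
    obtain ⟨g, hg, hg'⟩ := SetLike.exists_of_lt (hs.2.2.2.1 i)
    obtain ⟨hS, hS'⟩ := hs.commutatorElement_mem_and_notMem i haS hg hg'
    have hD : ⁅a, g⁆ ∈ derivedSeries G k :=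
      Subgroup.commutator_le_left _ ⊤ (Subgroup.commutator_mem_commutator haD (Subgroup.mem_top g))
    refine ⟨⁅a, ⁅a, g⁆⁆, ?_, (hs.commutatorElement_mem_and_notMem i haS hS hS').2⟩
    rw [derivedSeries_succ]
    exact Subgroup.commutator_mem_commutator haD hD

end IsPrincipalSeries

theorem stmt11 {G : Type} [Group G] (n : ℕ) (s : Fin (n + 1) → Subgroup G)
    (hs : IsPrincipalSeries s) :
    (∀ i : Fin (n + 1), derivedSeries G i ≤ s i) ∧
    (∀ i : Fin n, ¬ derivedSeries G i ≤ s i.succ) ∧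
    derivedSeries G n = ⊥ ∧ (∀ k : ℕ, k < n → derivedSeries G k ≠ ⊥) := by
  refine ⟨hs.derivedSeries_le, fun i hle => ?_, ?_, fun k hk hbot => ?_⟩
  · obtain ⟨a, haD, haS⟩ := hs.exists_mem_derivedSeries_notMem i i.isLt
    exact haS (hle haD)
  · simpa [hs.2.1] using hs.derivedSeries_le (Fin.last n)
  · obtain ⟨a, haD, haS⟩ := hs.exists_mem_derivedSeries_notMem k hk
    rw [hbot, Subgroup.mem_bot] at haD
    exact haS (haD ▸ one_mem _)
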